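/- arXiv:2009.04902 — 5 statements merged into one kernel-verified Lean document; each statement's English description precedes it below -/
import Mathlib

section
/- Let 0 < s < k and let E ⊆ B(0,1) ⊆ ℝ^k be a compact set carrying a Borel probability measure μ such that μ(B(x,r)) ≤ C r^s for some constant C > 0 and all balls B(x,r). Then there exist ρ > 0, a point u ∈ ℝ^k and a compact subset F ⊆ E such that the set E′ := ρ^{−1}(F − u) is contained in B(0,1) and supports a Borel probability measure μ′ satisfying μ′(B(x,r)) ≤ 4 r^s for all x ∈ ℝ^k and all r > 0. -/
open MeasureTheory Metric Real Set
open scoped ENNReal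

noncomputable section

abbrev Ek (k : ℕ) := EuclideanSpace ℝ (Fin k)

/-- Lemma 3.1: if `0 < s < k` and `E ⊆ B(0,1) ⊆ ℝ^k` is compact and carries
a Borel probability measure `μ` with `μ(B(x,r)) ≤ C r^s` for some `C > 0` and all balls, then
there are `ρ > 0`, `u ∈ ℝ^k` and a compact `F ⊆ E` such that `E' = ρ⁻¹(F − u) ⊆ B(0,1)`
supports a Borel probability measure `μ'` with `μ'(B(x,r)) ≤ 4 r^s` for all balls. -/
theorem statement2 (k : ℕ) (s : ℝ) (hs0 : 0 < s) (hsk : s < k)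
    (E : Set (Ek k)) (hE : IsCompact E) (hEsub : E ⊆ ball (0 : Ek k) 1)
    (μ : Measure (Ek k)) (hμ : IsProbabilityMeasure μ) (hμE : μ E = 1)
    (C : ℝ) (hC : 0 < C)
    (hfrost : ∀ (x : Ek k) (r : ℝ), 0 < r → μ (ball x r) ≤ ENNReal.ofReal (C * r ^ s)) :
    ∃ (ρ : ℝ) (u : Ek k) (F : Set (Ek k)), 0 < ρ ∧ IsCompact F ∧ F ⊆ E ∧
      (fun y => ρ⁻¹ • (y - u)) '' F ⊆ ball (0 : Ek k) 1 ∧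
      ∃ μ' : Measure (Ek k), IsProbabilityMeasure μ' ∧
        μ' ((fun y => ρ⁻¹ • (y - u)) '' F) = 1 ∧
        ∀ (x : Ek k) (r : ℝ), 0 < r → μ' (ball x r) ≤ ENNReal.ofReal (4 * r ^ s) := by
  classical
  have hcompl : μ Eᶜ = 0 := by
    have h := measure_compl hE.measurableSet (measure_ne_top μ E)
    rw [hμE, measure_univ, tsub_self] at h
    exact h
  -- the sup of μ(closedBall u t)/t^s over all balls
  set f : Ek k × {t : ℝ // 0 < t} → ℝ≥0∞ :=
    fun p => μ (closedBall p.1 p.2.1) / ENNReal.ofReal (p.2.1 ^ s) with hf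
  set S : ℝ≥0∞ := ⨆ p, f p with hSdef
  have hfle : ∀ p, f p ≤ S := fun p => le_iSup f p
  -- S ≥ 1
  have hS1 : (1 : ℝ≥0∞) ≤ S := by
    refine le_trans ?_ (hfle ⟨0, ⟨1, one_pos⟩⟩)
    simp only [hf, Real.one_rpow, ENNReal.ofReal_one, div_one]
    calc (1 : ℝ≥0∞) = μ E := hμE.symm
      _ ≤ μ (closedBall (0 : Ek k) 1) :=
        measure_mono (hEsub.trans ball_subset_closedBall)
  have hS0 : S ≠ 0 := by
    intro h; rw [h] at hS1; exact (zero_lt_one.not_ge hS1)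
  -- S < ∞
  have hSfin : S ≠ ⊤ := by
    have hbound : ∀ p, f p ≤ ENNReal.ofReal (C * 2 ^ s) := by
      rintro ⟨u, t, ht⟩
      have hsub : closedBall u t ⊆ ball u (2 * t) := by
        apply closedBall_subset_ball; linarith
      have h1 : μ (closedBall u t) ≤ ENNReal.ofReal (C * (2 * t) ^ s) :=
        le_trans (measure_mono hsub) (hfrost u (2 * t) (by linarith))
      have h2 : C * (2 * t) ^ s = (C * 2 ^ s) * t ^ s := by
        rw [mul_rpow (by norm_num) ht.le]; ring
      rw [hf]
      rw [ENNReal.div_le_iff (by positivity) ENNReal.ofReal_ne_top]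
      rw [← ENNReal.ofReal_mul (by positivity)]
      rw [h2] at h1; exact h1
    have := iSup_le hbound
    exact ne_top_of_le_ne_top ENNReal.ofReal_ne_top this
  -- choose a near-optimal ball
  have hlt : (2 : ℝ≥0∞)⁻¹ * S < S := by
    simpa [ENNReal.div_eq_inv_mul] using ENNReal.half_lt_self hS0 hSfin
  obtain ⟨⟨u, τ, hτ⟩, hp⟩ := lt_iSup_iff.mp hlt
  set A : ℝ≥0∞ := ENNReal.ofReal (τ ^ s) with hA
  have hA0 : A ≠ 0 := (ENNReal.ofReal_pos.mpr (Real.rpow_pos_of_pos hτ s)).ne'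
  have hAfin : A ≠ ⊤ := ENNReal.ofReal_ne_top
  set M : ℝ≥0∞ := μ (closedBall u τ) with hM
  have hMlb : (2 : ℝ≥0∞)⁻¹ * S * A ≤ M := by
    have := (ENNReal.lt_div_iff_mul_lt (Or.inl hA0) (Or.inl hAfin)).mp hp
    exact this.le
  have hM0 : M ≠ 0 := by
    intro h
    rw [h, le_zero_iff] at hMlb
    exact (mul_ne_zero (mul_ne_zero (by simp) hS0) hA0) hMlb
  have hMfin : M ≠ ⊤ := measure_ne_top μ _
  -- scaling factor
  set c : ℝ := (2 : ℝ) ^ (s⁻¹) with hc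
  have hc1 : 1 < c := by
    rw [hc, one_lt_rpow_iff (by norm_num)]
    left; exact ⟨one_lt_two, by positivity⟩
  have hc0 : 0 < c := lt_trans one_pos hc1
  set ρ : ℝ := c * τ with hρdef
  have hρ0 : 0 < ρ := mul_pos hc0 hτ
  have hρs : ρ ^ s = 2 * τ ^ s := by
    rw [hρdef, mul_rpow hc0.le hτ.le, hc, ← Real.rpow_mul (by norm_num : (0:ℝ) ≤ 2),
      inv_mul_cancel₀ hs0.ne', Real.rpow_one]
  set F : Set (Ek k) := E ∩ closedBall u τ with hFdef
  have hFcomp : IsCompact F := hE.inter_right Metric.isClosed_closedBall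
  have hFE : F ⊆ E := inter_subset_left
  have hμF : μ F = M := by
    rw [hFdef, inter_comm]
    exact measure_inter_conull hcompl
  set T : Ek k → Ek k := fun y => ρ⁻¹ • (y - u) with hT
  have hTcont : Continuous T := by
    apply Continuous.smul (f := fun _ => ρ⁻¹) (g := fun y => y - u) continuous_const
    exact continuous_id.sub continuous_const
  have hTmeas : Measurable T := hTcont.measurable
  -- image in unit ball
  have himg : T '' F ⊆ ball (0 : Ek k) 1 := by
    rintro z ⟨y, hy, rfl⟩
    have hyu : dist y u ≤ τ := mem_closedBall.mp hy.2
    rw [mem_ball, hT]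
    simp only [dist_eq_norm, sub_zero, norm_smul, norm_inv, Real.norm_eq_abs,
      abs_of_pos hρ0]
    calc ρ⁻¹ * ‖y - u‖ ≤ ρ⁻¹ * τ := by
          apply mul_le_mul_of_nonneg_left _ (inv_nonneg.mpr hρ0.le)
          rw [← dist_eq_norm]; exact hyu
      _ = c⁻¹ * (τ⁻¹ * τ) := by rw [hρdef, mul_inv]; ring
      _ = c⁻¹ := by rw [inv_mul_cancel₀ (ne_of_gt hτ), mul_one]
      _ < 1 := by rw [inv_lt_one_iff₀]; right; exact hc1
  -- preimage of balls
  have hpre : ∀ (x : Ek k) (r : ℝ), 0 < r →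
      T ⁻¹' ball x r = ball (u + ρ • x) (ρ * r) := by
    intro x r hr
    ext y
    simp only [mem_preimage, mem_ball, hT, dist_eq_norm]
    have hkey : ρ⁻¹ • (y - u) - x = ρ⁻¹ • (y - (u + ρ • x)) := by
      rw [show y - (u + ρ • x) = (y - u) - ρ • x by abel,
        smul_sub ρ⁻¹ (y - u) (ρ • x), smul_smul, inv_mul_cancel₀ hρ0.ne', one_smul]
    rw [hkey, norm_smul, norm_inv, Real.norm_eq_abs, abs_of_pos hρ0,
      inv_mul_lt_iff₀ hρ0]
  -- the measure
  set μ' : Measure (Ek k) := M⁻¹ • (μ.restrict F).map T with hμ'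
  have hμ'apply : ∀ {B : Set (Ek k)}, MeasurableSet B →
      μ' B = M⁻¹ * μ (T ⁻¹' B ∩ F) := by
    intro B hBm
    rw [hμ', Measure.smul_apply, Measure.map_apply hTmeas hBm,
      Measure.restrict_apply (hTmeas hBm), smul_eq_mul]
  have hμ'univ : μ' univ = 1 := by
    rw [hμ'apply MeasurableSet.univ, preimage_univ, univ_inter, hμF,
      ENNReal.inv_mul_cancel hM0 hMfin]
  refine ⟨ρ, u, F, hρ0, hFcomp, hFE, himg, μ', ⟨hμ'univ⟩, ?_, ?_⟩
  · -- μ' (T '' F) = 1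
    have himgMeas : MeasurableSet (T '' F) :=
      (hFcomp.image hTcont).measurableSet
    refine le_antisymm (le_trans (measure_mono (subset_univ _)) hμ'univ.le) ?_
    rw [hμ'apply himgMeas]
    have hsub : F ⊆ T ⁻¹' (T '' F) ∩ F :=
      subset_inter (subset_preimage_image T F) subset_rfl
    calc (1 : ℝ≥0∞) = M⁻¹ * M := (ENNReal.inv_mul_cancel hM0 hMfin).symm
      _ ≤ M⁻¹ * μ (T ⁻¹' (T '' F) ∩ F) := by
          apply mul_le_mul_right
          rw [← hμF]; exact measure_mono hsub
  · -- ball bound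
    intro x r hr
    have hb : μ' (ball x r) = M⁻¹ * μ (T ⁻¹' ball x r ∩ F) :=
      hμ'apply measurableSet_ball
    have hmono : μ (T ⁻¹' ball x r ∩ F) ≤ μ (closedBall (u + ρ • x) (ρ * r)) := by
      apply measure_mono
      rw [hpre x r hr]
      exact inter_subset_left.trans ball_subset_closedBall
    have hSball : μ (closedBall (u + ρ • x) (ρ * r)) ≤
        S * ENNReal.ofReal ((ρ * r) ^ s) := by
      have := hfle ⟨u + ρ • x, ⟨ρ * r, mul_pos hρ0 hr⟩⟩
      rw [hf] at this
      exact (ENNReal.div_le_iff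
        ((ENNReal.ofReal_pos.mpr (Real.rpow_pos_of_pos (mul_pos hρ0 hr) s)).ne')
        ENNReal.ofReal_ne_top).mp this
    set R : ℝ≥0∞ := ENNReal.ofReal (r ^ s) with hR
    have hofr : ENNReal.ofReal ((ρ * r) ^ s) = 2 * A * R := by
      rw [mul_rpow hρ0.le hr.le, hρs, mul_assoc,
        ENNReal.ofReal_mul (by norm_num), ENNReal.ofReal_mul (by positivity),
        hA, hR, ENNReal.ofReal_ofNat, mul_assoc]
    calc μ' (ball x r) = M⁻¹ * μ (T ⁻¹' ball x r ∩ F) := hb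
      _ ≤ M⁻¹ * (S * ENNReal.ofReal ((ρ * r) ^ s)) :=
          mul_le_mul_right (hmono.trans hSball) _
      _ ≤ ((2 : ℝ≥0∞)⁻¹ * S * A)⁻¹ * (S * (2 * A * R)) := by
          rw [hofr]
          exact mul_le_mul_left (ENNReal.inv_le_inv' hMlb) _
      _ = ((2 : ℝ≥0∞)⁻¹)⁻¹ * (S⁻¹ * S) * (A⁻¹ * A) * (2 * R) := by
          rw [ENNReal.mul_inv (Or.inr hAfin) (Or.inr hA0),
            ENNReal.mul_inv (Or.inr hSfin) (Or.inr hS0)]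
          ring
      _ = 4 * R := by
          rw [ENNReal.inv_mul_cancel hS0 hSfin, ENNReal.inv_mul_cancel hA0 hAfin,
            inv_inv]
          ring
      _ = ENNReal.ofReal (4 * r ^ s) := by
          rw [ENNReal.ofReal_mul (by norm_num), hR, ENNReal.ofReal_ofNat]
end
end

section
/- There exists a constant C > 0, depending only on ψ and k, such that for every 0 < s < k, every Borel probability measure μ on ℝ^k satisfying μ(B(x,r)) ≤ 4 r^s for all x ∈ ℝ^k and r > 0, and every 0 < ε ≤ 1, the function μ_ε = μ * ψ_ε is continuous and satisfies ‖μ_ε‖_∞ ≤ C ε^{s−k}. -/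
open MeasureTheory Metric Real Set Filter
open scoped ENNReal FourierTransform

noncomputable section

/-- `μ_ε = μ * ψ_ε` where `ψ_ε(x) = ε^{-k} ψ(x/ε)`, i.e. `μ_ε(x) = ∫ ψ_ε(x-y) dμ(y)`. -/
def mollify (k : ℕ) (ψ : Ek k → ℝ) (μ : Measure (Ek k)) (ε : ℝ) (x : Ek k) : ℝ :=
  ∫ y, (ε ^ k)⁻¹ * ψ (ε⁻¹ • (x - y)) ∂μ

/-- there is `C > 0`, depending only on `ψ` and `k`, such that for every
`0 < s < k`, every Borel probability measure `μ` on `ℝ^k` with `μ(B(x,r)) ≤ 4 r^s`, and every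
`0 < ε ≤ 1`, the function `μ_ε = μ * ψ_ε` is continuous with `‖μ_ε‖_∞ ≤ C ε^{s-k}`. -/
theorem statement9 (k : ℕ) (ψ : SchwartzMap (Ek k) ℝ)
    (hψpos : ∀ x, 0 ≤ ψ x)
    (hψFsupp : HasCompactSupport (𝓕 (fun x => (ψ x : ℂ))))
    (hψFsmooth : ContDiff ℝ (⊤ : ℕ∞) (𝓕 (fun x => (ψ x : ℂ))))
    (hψF0 : 𝓕 (fun x => (ψ x : ℂ)) 0 = 1)
    (hψF01 : ∀ ξ, ∃ t : ℝ, 0 ≤ t ∧ t ≤ 1 ∧ 𝓕 (fun x => (ψ x : ℂ)) ξ = t) :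
    ∃ C : ℝ, 0 < C ∧
      ∀ (s : ℝ), 0 < s → s < k →
      ∀ (μ : Measure (Ek k)), IsProbabilityMeasure μ →
        (∀ (x : Ek k) (r : ℝ), 0 < r → μ (ball x r) ≤ ENNReal.ofReal (4 * r ^ s)) →
      ∀ (ε : ℝ), 0 < ε → ε ≤ 1 →
        Continuous (mollify k ψ μ ε) ∧
        ∀ x : Ek k, |mollify k ψ μ ε x| ≤ C * ε ^ (s - (k : ℝ)) := by
  classical
  obtain ⟨M0, hM0pos, hM0⟩ := ψ.decay 0 0
  obtain ⟨M1, hM1pos, hM1⟩ := ψ.decay (k + 1) 0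
  set M : ℝ := M0 + M1 with hM
  have hMpos : 0 < M := by positivity
  have hψle : ∀ z, ψ z ≤ M := by
    intro z
    have := hM0 z
    rw [pow_zero, one_mul, norm_iteratedFDeriv_zero] at this
    calc ψ z ≤ ‖ψ z‖ := le_abs_self _
    _ ≤ M0 := this
    _ ≤ M := by linarith
  have hψdecay : ∀ z, ‖z‖ ^ (k + 1) * ψ z ≤ M := by
    intro z
    have := hM1 z
    rw [norm_iteratedFDeriv_zero] at this
    have h2 : ‖ψ z‖ = ψ z := abs_of_nonneg (hψpos z)
    rw [h2] at this
    nlinarith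
  refine ⟨16 * M * 2 ^ k, by positivity, ?_⟩
  intro s hs hsk μ hprob hfrost ε hε hε1
  have hεk : (0:ℝ) < ε ^ k := by positivity
  set g : Ek k → Ek k → ℝ := fun x y => (ε ^ k)⁻¹ * ψ (ε⁻¹ • (x - y)) with hgdef
  have hgnonneg : ∀ x y, 0 ≤ g x y := fun x y =>
    mul_nonneg (by positivity) (hψpos _)
  have hgconty : ∀ x, Continuous (g x) := fun x =>
    continuous_const.mul (ψ.continuous.comp
      ((continuous_const.sub continuous_id).const_smul ε⁻¹))
  have hgle : ∀ x y, g x y ≤ (ε ^ k)⁻¹ * M := fun x y =>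
    mul_le_mul_of_nonneg_left (hψle _) (by positivity)
  constructor
  · -- continuity
    apply continuous_of_dominated (bound := fun _ => (ε ^ k)⁻¹ * M)
    · exact fun x => ((hgconty x).aestronglyMeasurable)
    · intro x
      filter_upwards with y
      rw [Real.norm_eq_abs, abs_of_nonneg (hgnonneg x y)]
      exact hgle x y
    · exact integrable_const _
    · filter_upwards with y
      exact continuous_const.mul (ψ.continuous.comp
        ((continuous_id.sub continuous_const).const_smul ε⁻¹))
  · intro x
    -- annuli
    set B : ℕ → Set (Ek k) := fun j => ball x (2 ^ j * ε) with hBdef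
    set A : ℕ → Set (Ek k) := fun j => Nat.casesOn j (B 0) (fun i => B (i + 1) \ B i)
      with hAdef
    have hAsub : ∀ j, A j ⊆ B j := by
      intro j
      cases j with
      | zero => exact subset_rfl
      | succ i => exact diff_subset
    have hAmeas : ∀ j, MeasurableSet (A j) := by
      intro j
      cases j with
      | zero => exact measurableSet_ball
      | succ i => exact measurableSet_ball.diff measurableSet_ball
    have hcover : (univ : Set (Ek k)) ⊆ ⋃ j, A j := by
      intro y _
      have hex : ∃ n, y ∈ B n := by
        obtain ⟨n, hn⟩ := pow_unbounded_of_one_lt (dist y x / ε) one_lt_two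
        exact ⟨n, by simpa [hBdef, mem_ball] using (div_lt_iff₀ hε).mp hn⟩
      rw [mem_iUnion]
      rcases h : Nat.find hex with _ | m
      · exact ⟨0, by simpa [hAdef] using h ▸ Nat.find_spec hex⟩
      · refine ⟨m + 1, ?_⟩
        have h1 : y ∈ B (m + 1) := h ▸ Nat.find_spec hex
        have h2 : y ∉ B m := Nat.find_min hex (by omega)
        exact ⟨h1, h2⟩
    set c : ℕ → ℝ := fun j =>
      Nat.casesOn j ((ε ^ k)⁻¹ * M) (fun i => (ε ^ k)⁻¹ * (M / 2 ^ (i * (k + 1))))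
      with hcdef
    have hcnonneg : ∀ j, 0 ≤ c j := by
      intro j; cases j with
      | zero =>
        show (0:ℝ) ≤ (ε ^ k)⁻¹ * M
        positivity
      | succ i =>
        show (0:ℝ) ≤ (ε ^ k)⁻¹ * (M / 2 ^ (i * (k + 1)))
        positivity
    have hgA : ∀ j, ∀ y ∈ A j, g x y ≤ c j := by
      intro j y hy
      cases j with
      | zero => exact (hgle x y).trans_eq rfl
      | succ i =>
        have hdist : 2 ^ i * ε ≤ dist y x := by
          have := hy.2
          simpa [hBdef, mem_ball, not_lt] using this
        have hznorm : (2:ℝ) ^ i ≤ ‖ε⁻¹ • (x - y)‖ := by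
          rw [norm_smul, Real.norm_eq_abs, abs_of_pos (inv_pos.mpr hε)]
          have : ‖x - y‖ = dist y x := by rw [← dist_eq_norm, dist_comm]
          rw [this]
          calc (2:ℝ) ^ i = ε⁻¹ * (2 ^ i * ε) := by field_simp
            _ ≤ ε⁻¹ * dist y x := by gcongr
        have hz1 : (1:ℝ) ≤ ‖ε⁻¹ • (x - y)‖ := le_trans (one_le_pow₀ one_le_two) hznorm
        have hzpos : (0:ℝ) < ‖ε⁻¹ • (x - y)‖ := lt_of_lt_of_le one_pos hz1
        have hψz : ψ (ε⁻¹ • (x - y)) ≤ M / 2 ^ (i * (k + 1)) := by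
          have h1 : ψ (ε⁻¹ • (x - y)) ≤ M / ‖ε⁻¹ • (x - y)‖ ^ (k + 1) := by
            rw [le_div_iff₀ (by positivity)]
            calc ψ (ε⁻¹ • (x - y)) * ‖ε⁻¹ • (x - y)‖ ^ (k+1)
                = ‖ε⁻¹ • (x - y)‖ ^ (k+1) * ψ (ε⁻¹ • (x - y)) := by ring
              _ ≤ M := hψdecay _
          refine h1.trans ?_
          have : (2:ℝ) ^ (i * (k + 1)) ≤ ‖ε⁻¹ • (x - y)‖ ^ (k + 1) := by
            rw [pow_mul]
            exact pow_le_pow_left₀ (by positivity) hznorm _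
          exact div_le_div_of_nonneg_left hMpos.le (by positivity) this
        exact mul_le_mul_of_nonneg_left hψz (by positivity)
    -- the key lintegral bound
    have key : ∫⁻ y, ENNReal.ofReal (g x y) ∂μ
        ≤ ENNReal.ofReal (16 * M * 2 ^ k * ε ^ (s - (k:ℝ))) := by
      have hterm : ∀ j, ∫⁻ y in A j, ENNReal.ofReal (g x y) ∂μ
          ≤ ENNReal.ofReal (c j * (4 * ((2:ℝ) ^ j * ε) ^ s)) := by
        intro j
        calc ∫⁻ y in A j, ENNReal.ofReal (g x y) ∂μ
            ≤ ∫⁻ _ in A j, ENNReal.ofReal (c j) ∂μ :=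
              setLIntegral_mono' (hAmeas j) (fun y hy =>
                ENNReal.ofReal_le_ofReal (hgA j y hy))
          _ = ENNReal.ofReal (c j) * μ (A j) := setLIntegral_const _ _
          _ ≤ ENNReal.ofReal (c j) * ENNReal.ofReal (4 * ((2:ℝ) ^ j * ε) ^ s) := by
              refine mul_le_mul_right ?_ _
              exact le_trans (measure_mono (hAsub j)) (hfrost x _ (by positivity))
          _ = ENNReal.ofReal (c j * (4 * ((2:ℝ) ^ j * ε) ^ s)) :=
              (ENNReal.ofReal_mul (hcnonneg j)).symm
      have hεs : (0:ℝ) < ε ^ s := rpow_pos_of_pos hε s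
      have he2 : ε ^ (s - (k:ℝ)) = ε ^ s * (ε ^ k)⁻¹ := by
        rw [rpow_sub hε, div_eq_mul_inv, rpow_natCast]
      have hcd : ∀ j, c j * (4 * ((2:ℝ) ^ j * ε) ^ s)
          ≤ 8 * M * 2 ^ k * ε ^ (s - (k:ℝ)) * (1/2:ℝ) ^ j := by
        intro j
        have he1 : ((2:ℝ) ^ j * ε) ^ s = ((2:ℝ) ^ j) ^ s * ε ^ s :=
          mul_rpow (by positivity) hε.le
        cases j with
        | zero =>
          simp only [pow_zero, one_mul, hcdef]
          rw [he2]
          have h2k : (1:ℝ) ≤ 2 ^ k := one_le_pow₀ one_le_two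
          calc (ε ^ k)⁻¹ * M * (4 * ε ^ s) = 4 * (M * (ε ^ s * (ε ^ k)⁻¹)) := by ring
            _ ≤ 8 * 2 ^ k * (M * (ε ^ s * (ε ^ k)⁻¹)) := by
                refine mul_le_mul_of_nonneg_right (by nlinarith) (by positivity)
            _ = 8 * M * 2 ^ k * (ε ^ s * (ε ^ k)⁻¹) * 1 := by ring
        | succ i =>
          simp only [hcdef]
          rw [he1, he2]
          have e3 : ((2:ℝ) ^ (i + 1)) ^ s ≤ 2 ^ ((i + 1) * k) := by
            calc ((2:ℝ) ^ (i + 1)) ^ s ≤ ((2:ℝ) ^ (i + 1)) ^ (k:ℝ) :=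
                rpow_le_rpow_of_exponent_le (one_le_pow₀ one_le_two) hsk.le
              _ = 2 ^ ((i + 1) * k) := by rw [rpow_natCast, ← pow_mul]
          calc (ε ^ k)⁻¹ * (M / 2 ^ (i * (k + 1))) * (4 * (((2:ℝ) ^ (i+1)) ^ s * ε ^ s))
              ≤ (ε ^ k)⁻¹ * (M / 2 ^ (i * (k + 1))) * (4 * ((2:ℝ) ^ ((i+1)*k) * ε ^ s)) := by
                refine mul_le_mul_of_nonneg_left ?_ (by positivity)
                refine mul_le_mul_of_nonneg_left ?_ (by norm_num)
                exact mul_le_mul_of_nonneg_right e3 hεs.le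
            _ = 8 * M * 2 ^ k * (ε ^ s * (ε ^ k)⁻¹) * (1/2:ℝ) ^ (i + 1) := by
                rw [div_pow, one_pow]
                field_simp
                ring
      calc ∫⁻ y, ENNReal.ofReal (g x y) ∂μ
          = ∫⁻ y in univ, ENNReal.ofReal (g x y) ∂μ := (setLIntegral_univ _).symm
        _ ≤ ∫⁻ y in ⋃ j, A j, ENNReal.ofReal (g x y) ∂μ := lintegral_mono_set hcover
        _ ≤ ∑' j, ∫⁻ y in A j, ENNReal.ofReal (g x y) ∂μ := lintegral_iUnion_le _ _
        _ ≤ ∑' j, ENNReal.ofReal (8 * M * 2 ^ k * ε ^ (s - (k:ℝ)) * (1/2:ℝ) ^ j) :=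
            ENNReal.tsum_le_tsum (fun j =>
              (hterm j).trans (ENNReal.ofReal_le_ofReal (hcd j)))
        _ = ENNReal.ofReal (16 * M * 2 ^ k * ε ^ (s - (k:ℝ))) := by
            rw [← ENNReal.ofReal_tsum_of_nonneg (fun j => by positivity)
              (summable_geometric_two.mul_left _)]
            congr 1
            rw [tsum_mul_left, tsum_geometric_two]
            ring
    -- conclude
    have hmeas : AEStronglyMeasurable (fun y => g x y) μ := (hgconty x).aestronglyMeasurable
    have heq : mollify k ψ μ ε x = (∫⁻ y, ENNReal.ofReal (g x y) ∂μ).toReal :=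
      integral_eq_lintegral_of_nonneg_ae (ae_of_all _ (hgnonneg x)) hmeas
    have hnn : 0 ≤ mollify k ψ μ ε x := integral_nonneg (hgnonneg x)
    rw [abs_of_nonneg hnn, heq]
    exact ENNReal.toReal_le_of_le_ofReal (by positivity) key
end
end

section
/- There exists a constant C > 0, depending only on ψ and k, such that for every 0 < s < k, every Borel probability measure μ on ℝ^k satisfying μ(B(x,r)) ≤ 4 r^s for all x ∈ ℝ^k and r > 0, and every 0 < ε ≤ 1, one has ∫_{ℝ^k} μ_ε(x) dμ(x) ≤ C ε^{s−k}. -/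
open MeasureTheory Metric Real Set Filter
open scoped ENNReal FourierTransform

noncomputable section

/-- there is `C > 0`, depending only on `ψ` and `k`, such that for every
`0 < s < k`, every Borel probability measure `μ` on `ℝ^k` with `μ(B(x,r)) ≤ 4 r^s`, and every
`0 < ε ≤ 1`, one has `∫ μ_ε(x) dμ(x) ≤ C ε^{s-k}`. -/
theorem statement10 (k : ℕ) (ψ : SchwartzMap (Ek k) ℝ)
    (hψpos : ∀ x, 0 ≤ ψ x)
    (hψFsupp : HasCompactSupport (𝓕 (fun x => (ψ x : ℂ))))
    (hψFsmooth : ContDiff ℝ (⊤ : ℕ∞) (𝓕 (fun x => (ψ x : ℂ))))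
    (hψF0 : 𝓕 (fun x => (ψ x : ℂ)) 0 = 1)
    (hψF01 : ∀ ξ, ∃ t : ℝ, 0 ≤ t ∧ t ≤ 1 ∧ 𝓕 (fun x => (ψ x : ℂ)) ξ = t) :
    ∃ C : ℝ, 0 < C ∧
      ∀ (s : ℝ), 0 < s → s < k →
      ∀ (μ : Measure (Ek k)), IsProbabilityMeasure μ →
        (∀ (x : Ek k) (r : ℝ), 0 < r → μ (ball x r) ≤ ENNReal.ofReal (4 * r ^ s)) →
      ∀ (ε : ℝ), 0 < ε → ε ≤ 1 →
        ∫ x, mollify k ψ μ ε x ∂μ ≤ C * ε ^ (s - (k : ℝ)) := by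
  obtain ⟨C0, hC0pos, hC0⟩ := ψ.decay 0 0
  obtain ⟨C1, hC1pos, hC1⟩ := ψ.decay (k + 1) 0
  set M : ℝ := max C0 C1 with hM
  have hMpos : 0 < M := lt_max_of_lt_left hC0pos
  have hψle : ∀ x, ψ x ≤ M := by
    intro x
    have := hC0 x
    simp only [pow_zero, one_mul, norm_iteratedFDeriv_zero] at this
    calc ψ x ≤ ‖ψ x‖ := le_abs_self _
      _ ≤ C0 := this
      _ ≤ M := le_max_left _ _
  have hψdecay : ∀ x, ‖x‖ ^ (k + 1) * ψ x ≤ M := by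
    intro x
    have := hC1 x
    simp only [norm_iteratedFDeriv_zero] at this
    calc ‖x‖ ^ (k + 1) * ψ x ≤ ‖x‖ ^ (k + 1) * ‖ψ x‖ := by
          gcongr; exact le_abs_self _
      _ ≤ C1 := this
      _ ≤ M := le_max_right _ _
  refine ⟨4 * M * ((k : ℝ) + 1), by positivity, ?_⟩
  intro s hs hsk μ hμ hfrost ε hε hε1
  set C : ℝ := 4 * M * ((k : ℝ) + 1) with hC
  have hkpos : (0 : ℝ) < k := lt_trans hs hsk
  have hkne : k ≠ 0 := by
    have : 0 < k := Nat.cast_pos.mp hkpos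
    omega
  set α : ℝ := s / ((k : ℝ) + 1) with hαdef
  have hα0 : 0 < α := by positivity
  have hα1 : α < 1 := by
    rw [hαdef, div_lt_one (by positivity)]
    linarith
  have hαs : α * ((k : ℝ) + 1) = s := by
    rw [hαdef]
    field_simp
  have h1α : 0 < 1 - α := by linarith
  have hεk : (0 : ℝ) < ε ^ k := pow_pos hε k
  set T : ℝ := M * (ε ^ k)⁻¹ with hT
  have hTpos : 0 < T := by positivity
  -- pointwise bound on the mollification
  have key : ∀ x : Ek k, mollify k ψ μ ε x ≤ C * ε ^ (s - (k : ℝ)) := by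
    intro x
    set f : Ek k → ℝ := fun y => (ε ^ k)⁻¹ * ψ (ε⁻¹ • (x - y)) with hfdef
    have hf_nonneg : ∀ y, 0 ≤ f y := fun y => mul_nonneg (by positivity) (hψpos _)
    have hf_cont : Continuous f :=
      continuous_const.mul (ψ.continuous.comp
        (by fun_prop))
    have hrhs_nonneg : (0 : ℝ) ≤ C * ε ^ (s - (k : ℝ)) := by positivity
    have hmoll : mollify k ψ μ ε x = ∫ y, f y ∂μ := rfl
    rw [hmoll, integral_eq_lintegral_of_nonneg_ae (ae_of_all _ hf_nonneg)
      hf_cont.aestronglyMeasurable]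
    refine ENNReal.toReal_le_of_le_ofReal hrhs_nonneg ?_
    rw [lintegral_eq_lintegral_meas_lt μ (ae_of_all _ hf_nonneg) hf_cont.aemeasurable]
    set g : ℝ → ℝ≥0∞ :=
      (Ioc (0 : ℝ) T).indicator (fun t => ENNReal.ofReal (4 * (M * ε) ^ α * t ^ (-α))) with hg
    have hbound : ∀ t ∈ Ioi (0 : ℝ), μ {y | t < f y} ≤ g t := by
      intro t ht
      have ht0 : (0 : ℝ) < t := ht
      by_cases hTt : t ≤ T
      · -- use the Frostman bound on a ball
        set r : ℝ := (M * ε / t) ^ (((k : ℝ) + 1))⁻¹ with hr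
        have hMεt : (0 : ℝ) < M * ε / t := by positivity
        have hrpos : 0 < r := rpow_pos_of_pos hMεt _
        have hsub : {y | t < f y} ⊆ ball x r := by
          intro y hy
          simp only [mem_setOf_eq] at hy
          set z := ε⁻¹ • (x - y) with hz
          have hψz : t * ε ^ k < ψ z := by
            have : t < ψ z / ε ^ k := by
              rw [div_eq_inv_mul]; exact hy
            exact (lt_div_iff₀ hεk).mp this
          have hψzpos : 0 < ψ z := lt_trans (by positivity) hψz
          have hnz : ‖z‖ = ε⁻¹ * ‖x - y‖ := by
            rw [hz, norm_smul, Real.norm_eq_abs, abs_of_pos (inv_pos.mpr hε)]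
          have hyx : ‖y - x‖ = ε * ‖z‖ := by
            rw [hnz, ← mul_assoc, mul_inv_cancel₀ (ne_of_gt hε), one_mul, norm_sub_rev]
          have hzk : ‖z‖ ^ (k + 1) < M / (t * ε ^ k) := by
            have h1 : ‖z‖ ^ (k + 1) * ψ z ≤ M := hψdecay z
            have h2 : ‖z‖ ^ (k + 1) ≤ M / ψ z := (le_div_iff₀ hψzpos).mpr h1
            calc ‖z‖ ^ (k + 1) ≤ M / ψ z := h2
              _ < M / (t * ε ^ k) := by
                  apply div_lt_div_of_pos_left hMpos (by positivity) hψz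
          have hd : ‖y - x‖ ^ (k + 1) < M * ε / t := by
            calc ‖y - x‖ ^ (k + 1) = ε ^ (k + 1) * ‖z‖ ^ (k + 1) := by
                  rw [hyx, mul_pow]
              _ < ε ^ (k + 1) * (M / (t * ε ^ k)) := by
                  exact mul_lt_mul_of_pos_left hzk (by positivity)
              _ = M * ε / t := by
                  field_simp
                  ring
          have : ‖y - x‖ < r := by
            have h1 : ‖y - x‖ = (‖y - x‖ ^ (k + 1)) ^ ((((k : ℕ) + 1 : ℕ) : ℝ))⁻¹ := by
              rw [pow_rpow_inv_natCast (norm_nonneg _) (Nat.succ_ne_zero k)]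
            have hcast : ((((k : ℕ) + 1 : ℕ)) : ℝ) = (k : ℝ) + 1 := by push_cast; ring
            rw [h1, hcast]
            exact Real.rpow_lt_rpow (by positivity) hd (by positivity)
          simpa [mem_ball, dist_eq_norm] using this
        have hval : g t = ENNReal.ofReal (4 * (M * ε) ^ α * t ^ (-α)) := by
          rw [hg, indicator_of_mem (mem_Ioc.mpr ⟨ht0, hTt⟩)]
        have hrs : 4 * r ^ s = 4 * (M * ε) ^ α * t ^ (-α) := by
          rw [hr, ← Real.rpow_mul (le_of_lt hMεt)]
          have hexp : ((k : ℝ) + 1)⁻¹ * s = α := by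
            rw [hαdef, inv_mul_eq_div]
          rw [hexp, Real.div_rpow (by positivity) (le_of_lt ht0),
            Real.rpow_neg (le_of_lt ht0)]
          ring
        calc μ {y | t < f y} ≤ μ (ball x r) := measure_mono hsub
          _ ≤ ENNReal.ofReal (4 * r ^ s) := hfrost x r hrpos
          _ = g t := by rw [hval, hrs]
      · -- the superlevel set is empty
        have hempty : {y | t < f y} = ∅ := by
          ext y
          simp only [mem_setOf_eq, mem_empty_iff_false, iff_false, not_lt]
          calc f y ≤ (ε ^ k)⁻¹ * M := by
                exact mul_le_mul_of_nonneg_left (hψle _) (by positivity)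
            _ = T := by rw [hT]; ring
            _ ≤ t := le_of_not_ge hTt
        simp [hempty]
    have hIoc : ∫⁻ t in Ioi (0 : ℝ), g t = ∫⁻ t in Ioc (0 : ℝ) T,
        ENNReal.ofReal (4 * (M * ε) ^ α * t ^ (-α)) := by
      rw [hg, lintegral_indicator measurableSet_Ioc, Measure.restrict_restrict measurableSet_Ioc,
        inter_eq_left.mpr Ioc_subset_Ioi_self]
    have hint : IntegrableOn (fun t : ℝ => 4 * (M * ε) ^ α * t ^ (-α)) (Ioc (0 : ℝ) T) := by
      have h := (intervalIntegral.intervalIntegrable_rpow' (a := 0) (b := T) (r := -α) (by linarith)).1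
      exact h.const_mul _
    have hnn : 0 ≤ᵐ[volume.restrict (Ioc (0 : ℝ) T)]
        fun t : ℝ => 4 * (M * ε) ^ α * t ^ (-α) := by
      refine (ae_restrict_iff' measurableSet_Ioc).mpr (ae_of_all _ fun t ht => ?_)
      have := ht.1
      positivity
    have hcomp : ∫ t in Ioc (0 : ℝ) T, 4 * (M * ε) ^ α * t ^ (-α) ≤ C * ε ^ (s - (k : ℝ)) := by
      have hI : ∫ t in Ioc (0 : ℝ) T, 4 * (M * ε) ^ α * t ^ (-α)
          = 4 * (M * ε) ^ α * (T ^ (1 - α) / (1 - α)) := by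
        rw [← intervalIntegral.integral_of_le (le_of_lt hTpos),
          intervalIntegral.integral_const_mul,
          integral_rpow (Or.inl (by linarith : (-1 : ℝ) < -α))]
        rw [Real.zero_rpow (by linarith : -α + 1 ≠ 0),
          (by ring : -α + 1 = 1 - α)]
        ring
      rw [hI]
      have hMε : (M * ε) ^ α = M ^ α * ε ^ α := Real.mul_rpow hMpos.le hε.le
      have hTv : T ^ (1 - α) = M ^ (1 - α) * ε ^ (-(k : ℝ) * (1 - α)) := by
        have h1 : (ε ^ k)⁻¹ = ε ^ (-(k : ℝ)) := by
          rw [← Real.rpow_natCast ε k, ← Real.rpow_neg hε.le]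
        rw [hT, Real.mul_rpow hMpos.le (by positivity), h1, ← Real.rpow_mul hε.le]
      have hexp : ε ^ α * ε ^ (-(k : ℝ) * (1 - α)) = ε ^ (s - (k : ℝ)) := by
        rw [← Real.rpow_add hε]
        congr 1
        nlinarith [hαs]
      have hM1 : M ^ α * M ^ (1 - α) = M := by
        rw [← Real.rpow_add hMpos]
        simp
      have hdivle : 1 / (1 - α) ≤ (k : ℝ) + 1 := by
        rw [div_le_iff₀ h1α]
        nlinarith [hαs, hsk]
      rw [hMε, hTv]
      calc 4 * (M ^ α * ε ^ α) * (M ^ (1 - α) * ε ^ (-(k : ℝ) * (1 - α)) / (1 - α))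
          = 4 * (M ^ α * M ^ (1 - α)) * (ε ^ α * ε ^ (-(k : ℝ) * (1 - α))) * (1 / (1 - α)) := by
            ring
        _ = (4 * M * ε ^ (s - (k : ℝ))) * (1 / (1 - α)) := by rw [hM1, hexp]
        _ ≤ (4 * M * ε ^ (s - (k : ℝ))) * ((k : ℝ) + 1) :=
            mul_le_mul_of_nonneg_left hdivle (by positivity)
        _ = C * ε ^ (s - (k : ℝ)) := by rw [hC]; ring
    calc ∫⁻ t in Ioi (0 : ℝ), μ {y | t < f y}
        ≤ ∫⁻ t in Ioi (0 : ℝ), g t := setLIntegral_mono' measurableSet_Ioi hbound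
      _ = ∫⁻ t in Ioc (0 : ℝ) T, ENNReal.ofReal (4 * (M * ε) ^ α * t ^ (-α)) := hIoc
      _ = ENNReal.ofReal (∫ t in Ioc (0 : ℝ) T, 4 * (M * ε) ^ α * t ^ (-α)) :=
          (ofReal_integral_eq_lintegral_ofReal hint hnn).symm
      _ ≤ ENNReal.ofReal (C * ε ^ (s - (k : ℝ))) := ENNReal.ofReal_le_ofReal hcomp
  have hmoll_nonneg : ∀ x, 0 ≤ mollify k ψ μ ε x := fun x =>
    integral_nonneg fun y => mul_nonneg (by positivity) (hψpos _)
  calc ∫ x, mollify k ψ μ ε x ∂μ ≤ ∫ _x, C * ε ^ (s - (k : ℝ)) ∂μ :=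
        integral_mono_of_nonneg (ae_of_all _ hmoll_nonneg) (integrable_const _)
          (ae_of_all _ key)
    _ = C * ε ^ (s - (k : ℝ)) := by simp
end
end

section
/- There exists a constant c₀ > 0, depending only on ψ, φ and k, such that for every 0 < ε ≤ 1 and every Borel probability measure μ on ℝ^k: μ̃_ε(x) ≤ μ_ε(x) for all x ∈ ℝ^k, and ∫_{ℝ^k} μ̃_ε(x) dx ≥ 1/2. -/
open MeasureTheory Metric Real Set Filter
open scoped ENNReal FourierTransform Convolution

noncomputable section

/-- `μ̃_ε = μ * ψ̃_ε` where `ψ̃_ε(z) = ψ_ε(z) φ_ε(z)` and `φ_ε(z) = φ(c₀ ε^{-1/2} z)`. -/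
def mollifyT (k : ℕ) (ψ φ : Ek k → ℝ) (c₀ : ℝ) (μ : Measure (Ek k)) (ε : ℝ)
    (x : Ek k) : ℝ :=
  ∫ y, (ε ^ k)⁻¹ * ψ (ε⁻¹ • (x - y)) * φ ((c₀ * ε ^ (-(1 / 2 : ℝ))) • (x - y)) ∂μ

/-- there is a constant `c₀ > 0`, depending only on `ψ`, `φ` and `k`, such
that for every `0 < ε ≤ 1` and every Borel probability measure `μ` on `ℝ^k`:
`μ̃_ε(x) ≤ μ_ε(x)` for all `x`, and `∫ μ̃_ε(x) dx ≥ 1/2`. -/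
theorem statement11 (k : ℕ) (ψ : SchwartzMap (Ek k) ℝ)
    (hψpos : ∀ x, 0 ≤ ψ x)
    (hψFsupp : HasCompactSupport (𝓕 (fun x => (ψ x : ℂ))))
    (hψFsmooth : ContDiff ℝ (⊤ : ℕ∞) (𝓕 (fun x => (ψ x : ℂ))))
    (hψF0 : 𝓕 (fun x => (ψ x : ℂ)) 0 = 1)
    (hψF01 : ∀ ξ, ∃ t : ℝ, 0 ≤ t ∧ t ≤ 1 ∧ 𝓕 (fun x => (ψ x : ℂ)) ξ = t)
    (φ : Ek k → ℝ) (hφsmooth : ContDiff ℝ (⊤ : ℕ∞) φ) (hφ01 : ∀ x, φ x ∈ Set.Icc (0 : ℝ) 1)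
    (hφ1 : ∀ x ∈ ball (0 : Ek k) (1 / 2), φ x = 1)
    (hφ0 : ∀ (x : Ek k), x ∉ ball (0 : Ek k) 2 → φ x = 0) :
    ∃ c₀ : ℝ, 0 < c₀ ∧
      ∀ (ε : ℝ), 0 < ε → ε ≤ 1 →
      ∀ (μ : Measure (Ek k)), IsProbabilityMeasure μ →
        (∀ x : Ek k, mollifyT k ψ φ c₀ μ ε x ≤ mollify k ψ μ ε x) ∧
        (1 / 2 : ℝ) ≤ ∫ x, mollifyT k ψ φ c₀ μ ε x := by
  have hψint : Integrable (fun x => ψ x) := ψ.integrable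
  have hψcont : Continuous fun x : Ek k => ψ x := ψ.continuous
  have hφcont : Continuous φ := hφsmooth.continuous
  -- a uniform bound on ψ
  obtain ⟨C, hC⟩ := ψ.decay 0 0
  have hCbound : ∀ x, ψ x ≤ C := by
    intro x
    have := hC.2 x
    simp only [pow_zero, one_mul, norm_iteratedFDeriv_zero] at this
    calc ψ x ≤ ‖ψ x‖ := le_abs_self _
    _ ≤ C := this
  -- ∫ ψ = 1
  have hint1 : ∫ x, ψ x = 1 := by
    have h0 : 𝓕 (fun x => (ψ x : ℂ)) 0 = ∫ x, (ψ x : ℂ) := by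
      rw [Real.fourier_eq]
      simp
    rw [h0] at hψF0
    have h2 : ∀ x : Ek k, ((ψ x : ℝ) : ℂ) = RCLike.ofReal (ψ x) := fun _ => rfl
    simp_rw [h2, integral_ofReal (𝕜 := ℂ)] at hψF0
    have h3 : (RCLike.ofReal (∫ x, ψ x) : ℂ) = RCLike.ofReal (1:ℝ) := by simpa using hψF0
    exact RCLike.ofReal_inj.mp h3
  -- choose R with mass at least 1/2 on the closed ball of radius R
  obtain ⟨R, hR1, hRhalf⟩ : ∃ R : ℝ, 1 ≤ R ∧
      (1/2:ℝ) ≤ ∫ x in closedBall (0:Ek k) R, ψ x := by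
    have hmono : Monotone fun n : ℕ => closedBall (0:Ek k) (n:ℝ) := by
      intro m n hmn
      exact closedBall_subset_closedBall (by exact_mod_cast hmn)
    have hU : (⋃ n : ℕ, closedBall (0:Ek k) (n:ℝ)) = univ := iUnion_closedBall_nat _
    have htd := tendsto_setIntegral_of_monotone
      (fun n : ℕ => measurableSet_closedBall) hmono (by rw [hU]; exact hψint.integrableOn)
    rw [hU, setIntegral_univ, hint1] at htd
    have hev : ∀ᶠ n : ℕ in atTop, (1/2:ℝ) ≤ ∫ x in closedBall (0:Ek k) (n:ℝ), ψ x :=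
      htd.eventually (eventually_ge_nhds (by norm_num))
    obtain ⟨n, hn1, hn2⟩ := (hev.and (eventually_ge_atTop 1)).exists
    exact ⟨(n:ℝ), by exact_mod_cast hn2, hn1⟩
  have hR0 : (0:ℝ) < R := lt_of_lt_of_le one_pos hR1
  refine ⟨1/(4*R), by positivity, ?_⟩
  set c₀ : ℝ := 1/(4*R) with hc₀
  have hc₀pos : 0 < c₀ := by positivity
  intro ε hε hε1 μ hμ
  set a : ℝ := c₀ * ε ^ (-(1/2:ℝ)) with ha_def
  have ha : 0 < a := by positivity
  set b : ℝ := c₀ * ε ^ ((1/2:ℝ)) with hb_def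
  have hb : 0 < b := by positivity
  have hba : b * ε⁻¹ = a := by
    rw [hb_def, ha_def, mul_assoc]
    congr 1
    rw [← Real.rpow_neg_one ε, ← Real.rpow_add hε]
    norm_num
  have hεk : (0:ℝ) < ε ^ k := by positivity
  constructor
  · -- pointwise inequality
    intro x
    have hIψ : Integrable (fun y => (ε^k)⁻¹ * ψ (ε⁻¹ • (x - y))) μ := by
      refine Integrable.mono' (integrable_const ((ε^k)⁻¹ * C)) ?_ ?_
      · exact (continuous_const.mul (hψcont.comp
          ((continuous_const.sub continuous_id).const_smul ε⁻¹))).aestronglyMeasurable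
      · filter_upwards with y
        rw [norm_mul, norm_inv, norm_pow, Real.norm_eq_abs, abs_of_pos hε,
          Real.norm_eq_abs, abs_of_nonneg (hψpos _)]
        exact mul_le_mul_of_nonneg_left (hCbound _) (by positivity)
    have hIT : Integrable (fun y =>
        (ε^k)⁻¹ * ψ (ε⁻¹ • (x - y)) * φ (a • (x - y))) μ := by
      refine Integrable.mono' (integrable_const ((ε^k)⁻¹ * C)) ?_ ?_
      · exact ((continuous_const.mul (hψcont.comp
          ((continuous_const.sub continuous_id).const_smul ε⁻¹))).mul
          (hφcont.comp ((continuous_const.sub continuous_id).const_smul a))).aestronglyMeasurable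
      · filter_upwards with y
        rw [norm_mul, norm_mul, norm_inv, norm_pow, Real.norm_eq_abs, abs_of_pos hε,
          Real.norm_eq_abs, abs_of_nonneg (hψpos _), Real.norm_eq_abs,
          abs_of_nonneg (hφ01 _).1]
        calc (ε^k)⁻¹ * ψ (ε⁻¹ • (x - y)) * φ (a • (x - y))
            ≤ (ε^k)⁻¹ * ψ (ε⁻¹ • (x - y)) * 1 :=
              mul_le_mul_of_nonneg_left (hφ01 _).2
                (mul_nonneg (by positivity) (hψpos _))
          _ = (ε^k)⁻¹ * ψ (ε⁻¹ • (x - y)) := mul_one _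
          _ ≤ (ε^k)⁻¹ * C := mul_le_mul_of_nonneg_left (hCbound _) (by positivity)
    refine integral_mono hIT hIψ ?_
    intro y
    have h1 : 0 ≤ (ε^k)⁻¹ * ψ (ε⁻¹ • (x - y)) :=
      mul_nonneg (by positivity) (hψpos _)
    calc (ε^k)⁻¹ * ψ (ε⁻¹ • (x - y)) * φ (a • (x - y))
        ≤ (ε^k)⁻¹ * ψ (ε⁻¹ • (x - y)) * 1 :=
          mul_le_mul_of_nonneg_left (hφ01 _).2 h1
      _ = _ := mul_one _
  · -- integral lower bound
    set g : Ek k → ℝ := fun z => (ε^k)⁻¹ * ψ (ε⁻¹ • z) * φ (a • z) with hg_def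
    have hgcont : Continuous g :=
      (continuous_const.mul (hψcont.comp (continuous_id.const_smul ε⁻¹))).mul
        (hφcont.comp (continuous_id.const_smul a))
    have hgsupp : HasCompactSupport g := by
      refine HasCompactSupport.intro (isCompact_closedBall (0:Ek k) (2/a)) ?_
      intro z hz
      have hz' : 2/a < ‖z‖ := by
        simpa [mem_closedBall, dist_zero_right, not_le] using hz
      have : φ (a • z) = 0 := by
        apply hφ0
        rw [mem_ball_zero_iff, not_lt, norm_smul, Real.norm_eq_abs, abs_of_pos ha]
        calc (2:ℝ) = a * (2/a) := by field_simp
        _ ≤ a * ‖z‖ := by nlinarith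
      simp [hg_def, this]
    have hgint : Integrable g := hgcont.integrable_of_hasCompactSupport hgsupp
    -- the total integral of the truncated mollification equals ∫ g
    have hkey : ∫ x, mollifyT k ψ φ c₀ μ ε x = ∫ z, g z := by
      have hconv : (fun x => mollifyT k ψ φ c₀ μ ε x)
          = (fun _ : Ek k => (1:ℝ)) ⋆[ContinuousLinearMap.lsmul ℝ ℝ, μ] g := by
        funext x
        rw [convolution_def]
        simp only [ContinuousLinearMap.lsmul_apply, one_smul]
        rfl
      rw [hconv, integral_convolution _ (integrable_const 1) hgint]
      simp
    rw [hkey]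
    -- change of variables
    set h : Ek k → ℝ := fun u => ψ u * φ (b • u) with hh_def
    have hgh : ∀ z, g z = (ε^k)⁻¹ * h (ε⁻¹ • z) := by
      intro z
      simp only [hg_def, hh_def, smul_smul, hba, mul_assoc]
    have hch : ∫ z, g z = ∫ u, h u := by
      simp_rw [hgh]
      rw [integral_const_mul, Measure.integral_comp_smul volume h ε⁻¹,
        finrank_euclideanSpace_fin,
        abs_of_pos (by positivity : (0:ℝ) < (ε⁻¹ ^ k)⁻¹), smul_eq_mul]
      have hne : (ε⁻¹:ℝ) ^ k ≠ 0 := by positivity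
      field_simp
      rw [← mul_pow, mul_one_div_cancel hε.ne', one_pow, one_mul]
    rw [hch]
    have hhcont : Continuous h :=
      hψcont.mul (hφcont.comp (continuous_id.const_smul b))
    have hhsupp : HasCompactSupport h := by
      refine HasCompactSupport.intro (isCompact_closedBall (0:Ek k) (2/b)) ?_
      intro u hu
      have hu' : 2/b < ‖u‖ := by
        simpa [mem_closedBall, dist_zero_right, not_le] using hu
      have : φ (b • u) = 0 := by
        apply hφ0
        rw [mem_ball_zero_iff, not_lt, norm_smul, Real.norm_eq_abs, abs_of_pos hb]
        calc (2:ℝ) = b * (2/b) := by field_simp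
        _ ≤ b * ‖u‖ := by nlinarith
      simp [hh_def, this]
    have hhint : Integrable h := hhcont.integrable_of_hasCompactSupport hhsupp
    have hhnonneg : 0 ≤ h := fun u => mul_nonneg (hψpos u) (hφ01 _).1
    have hstep : ∫ u in closedBall (0:Ek k) R, h u ≤ ∫ u, h u :=
      setIntegral_le_integral hhint (Eventually.of_forall hhnonneg)
    have heq : ∫ u in closedBall (0:Ek k) R, h u = ∫ u in closedBall (0:Ek k) R, ψ u := by
      apply setIntegral_congr_fun measurableSet_closedBall
      intro u hu
      have hnorm : ‖u‖ ≤ R := by simpa [mem_closedBall, dist_zero_right] using hu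
      have hb1 : b ≤ c₀ := by
        have h12 : ε ^ ((1/2:ℝ)) ≤ 1 := Real.rpow_le_one hε.le hε1 (by norm_num)
        calc b = c₀ * ε ^ ((1/2:ℝ)) := hb_def
        _ ≤ c₀ * 1 := mul_le_mul_of_nonneg_left h12 hc₀pos.le
        _ = c₀ := mul_one _
      have : φ (b • u) = 1 := by
        apply hφ1
        rw [mem_ball_zero_iff, norm_smul, Real.norm_eq_abs, abs_of_pos hb]
        calc b * ‖u‖ ≤ c₀ * R := mul_le_mul hb1 hnorm (norm_nonneg u) hc₀pos.le
        _ = 1/4 := by rw [hc₀]; field_simp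
        _ < 1/2 := by norm_num
      simp [hh_def, this]
    linarith [hstep, heq ▸ hstep, hRhalf, heq]
end
end

section
/- For every N > 0 there exists a constant C_N > 0, depending only on ψ, φ, c₀, k and N, such that for every 0 < ε ≤ 1 and every Borel probability measure μ on ℝ^k, ‖μ_ε − μ̃_ε‖_∞ = sup_{x ∈ ℝ^k} |μ_ε(x) − μ̃_ε(x)| ≤ C_N ε^N. -/
open MeasureTheory Metric Real Set Filter
open scoped ENNReal FourierTransform

noncomputable section

/-- for every `N > 0` there is `C_N > 0`, depending only on `ψ`, `φ`, `c₀`,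
`k` and `N`, such that for every `0 < ε ≤ 1` and every Borel probability measure `μ` on `ℝ^k`,
`‖μ_ε − μ̃_ε‖_∞ ≤ C_N ε^N`. -/
theorem statement12 (k : ℕ) (ψ : SchwartzMap (Ek k) ℝ)
    (hψpos : ∀ x, 0 ≤ ψ x)
    (hψFsupp : HasCompactSupport (𝓕 (fun x => (ψ x : ℂ))))
    (hψFsmooth : ContDiff ℝ (⊤ : ℕ∞) (𝓕 (fun x => (ψ x : ℂ))))
    (hψF0 : 𝓕 (fun x => (ψ x : ℂ)) 0 = 1)
    (hψF01 : ∀ ξ, ∃ t : ℝ, 0 ≤ t ∧ t ≤ 1 ∧ 𝓕 (fun x => (ψ x : ℂ)) ξ = t)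
    (φ : Ek k → ℝ) (hφsmooth : ContDiff ℝ (⊤ : ℕ∞) φ) (hφ01 : ∀ x, φ x ∈ Set.Icc (0 : ℝ) 1)
    (hφ1 : ∀ x ∈ ball (0 : Ek k) (1 / 2), φ x = 1)
    (hφ0 : ∀ (x : Ek k), x ∉ ball (0 : Ek k) 2 → φ x = 0)
    (c₀ : ℝ) (hc₀ : 0 < c₀) :
    ∀ (N : ℝ), 0 < N →
    ∃ C : ℝ, 0 < C ∧
      ∀ (ε : ℝ), 0 < ε → ε ≤ 1 →
      ∀ (μ : Measure (Ek k)), IsProbabilityMeasure μ →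
      ∀ x : Ek k, |mollify k ψ μ ε x - mollifyT k ψ φ c₀ μ ε x| ≤ C * ε ^ N := by
  intro N hN
  set n : ℕ := ⌈N⌉₊ with hn
  set m : ℕ := 2 * (k + n) with hm
  obtain ⟨Cm, hCmpos, hdecay⟩ := ψ.decay m 0
  obtain ⟨C0, hC0pos, hbd⟩ := ψ.decay 0 0
  have hdecay' : ∀ u : Ek k, ‖u‖ ^ m * |ψ u| ≤ Cm := by
    intro u
    have := hdecay u
    simpa [norm_iteratedFDeriv_zero, Real.norm_eq_abs] using this
  have hbd' : ∀ u : Ek k, |ψ u| ≤ C0 := by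
    intro u
    have := hbd u
    simpa [norm_iteratedFDeriv_zero, Real.norm_eq_abs] using this
  refine ⟨Cm * (2 * c₀) ^ m, by positivity, ?_⟩
  intro ε hε hε1 μ hμ x
  have hεk : (0 : ℝ) < ε ^ k := pow_pos hε k
  set f : Ek k → ℝ := fun y => (ε ^ k)⁻¹ * ψ (ε⁻¹ • (x - y)) with hf
  set g : Ek k → ℝ := fun y =>
    (ε ^ k)⁻¹ * ψ (ε⁻¹ • (x - y)) * φ ((c₀ * ε ^ (-(1 / 2 : ℝ))) • (x - y)) with hg
  -- integrability
  have hcontf : Continuous f := by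
    apply continuous_const.mul
    exact ψ.continuous.comp (by fun_prop)
  have hcontg : Continuous g := by
    apply hcontf.mul
    exact hφsmooth.continuous.comp (by fun_prop)
  have hintf : Integrable f μ :=
    Integrable.mono' (integrable_const ((ε ^ k)⁻¹ * C0)) hcontf.aestronglyMeasurable
      (Filter.Eventually.of_forall fun y => by
        rw [Real.norm_eq_abs, hf]
        simp only
        rw [abs_mul, abs_of_pos (inv_pos.2 hεk)]
        exact mul_le_mul_of_nonneg_left (hbd' _) (inv_pos.2 hεk).le)
  have hintg : Integrable g μ :=
    Integrable.mono' (integrable_const ((ε ^ k)⁻¹ * C0)) hcontg.aestronglyMeasurable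
      (Filter.Eventually.of_forall fun y => by
        rw [Real.norm_eq_abs, hg]
        simp only
        rw [abs_mul, abs_mul, abs_of_pos (inv_pos.2 hεk)]
        have h1 : |φ ((c₀ * ε ^ (-(1 / 2 : ℝ))) • (x - y))| ≤ 1 := by
          obtain ⟨h0, h1⟩ := hφ01 ((c₀ * ε ^ (-(1 / 2 : ℝ))) • (x - y))
          rw [abs_of_nonneg h0]; exact h1
        calc (ε ^ k)⁻¹ * |ψ (ε⁻¹ • (x - y))| * |φ ((c₀ * ε ^ (-(1 / 2 : ℝ))) • (x - y))|
            ≤ (ε ^ k)⁻¹ * |ψ (ε⁻¹ • (x - y))| * 1 :=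
              mul_le_mul_of_nonneg_left h1 (by positivity)
          _ = (ε ^ k)⁻¹ * |ψ (ε⁻¹ • (x - y))| := by ring
          _ ≤ (ε ^ k)⁻¹ * C0 := mul_le_mul_of_nonneg_left (hbd' _) (inv_pos.2 hεk).le)
  -- pointwise bound
  have key : ∀ y : Ek k, |f y - g y| ≤ Cm * (2 * c₀) ^ m * ε ^ N := by
    intro y
    set u : Ek k := ε⁻¹ • (x - y) with hu
    set v : Ek k := (c₀ * ε ^ (-(1 / 2 : ℝ))) • (x - y) with hv
    have hεr : (0 : ℝ) < ε ^ (-(1 / 2 : ℝ)) := Real.rpow_pos_of_pos hε _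
    by_cases hvb : v ∈ ball (0 : Ek k) (1 / 2)
    · have : φ v = 1 := hφ1 v hvb
      have hfg : f y - g y = 0 := by
        show (ε ^ k)⁻¹ * ψ u - (ε ^ k)⁻¹ * ψ u * φ v = 0
        rw [this]; ring
      rw [hfg, abs_zero]
      positivity
    · have hvnorm : (1 / 2 : ℝ) ≤ ‖v‖ := by
        simpa [mem_ball, dist_zero_right, not_lt] using hvb
      have hvn : ‖v‖ = c₀ * ε ^ (-(1 / 2 : ℝ)) * ‖x - y‖ := by
        rw [hv, norm_smul, Real.norm_eq_abs, abs_of_pos (by positivity)]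
      have hun : ‖u‖ = ε⁻¹ * ‖x - y‖ := by
        rw [hu, norm_smul, Real.norm_eq_abs, abs_of_pos (inv_pos.2 hε)]
      have hxy : ε ^ ((1 : ℝ) / 2) / (2 * c₀) ≤ ‖x - y‖ := by
        rw [hvn] at hvnorm
        rw [div_le_iff₀ (by positivity)]
        have h2 : ε ^ ((1 : ℝ) / 2) * (ε ^ (-(1 / 2 : ℝ))) = 1 := by
          rw [← Real.rpow_add hε]; norm_num
        nlinarith [hεr, norm_nonneg (x - y)]
      have hulb : ε ^ (-(1 / 2 : ℝ)) / (2 * c₀) ≤ ‖u‖ := by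
        rw [hun]
        have h3 : ε⁻¹ * (ε ^ ((1 : ℝ) / 2) / (2 * c₀)) = ε ^ (-(1 / 2 : ℝ)) / (2 * c₀) := by
          rw [← Real.rpow_neg_one ε, div_eq_mul_inv, div_eq_mul_inv, ← mul_assoc,
            ← Real.rpow_add hε]
          norm_num
          ring
        rw [← h3]
        exact mul_le_mul_of_nonneg_left hxy (inv_pos.2 hε).le
      -- key decay estimate
      have hum : (ε ^ (-(1 / 2 : ℝ)) / (2 * c₀)) ^ m * |ψ u| ≤ Cm :=
        le_trans (mul_le_mul_of_nonneg_right
          (pow_le_pow_left₀ (by positivity) hulb m) (abs_nonneg _)) (hdecay' u)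
      have hpowm : (ε ^ (-(1 / 2 : ℝ))) ^ m = (ε ^ (k + n))⁻¹ := by
        rw [← Real.rpow_natCast (ε ^ (-(1 / 2 : ℝ))) m, ← Real.rpow_mul hε.le,
          ← Real.rpow_natCast ε (k + n), ← Real.rpow_neg hε.le]
        congr 1
        rw [hm]
        push_cast
        ring
      have hψu : |ψ u| ≤ Cm * (2 * c₀) ^ m * ε ^ (k + n) := by
        rw [div_pow, hpowm] at hum
        have h2c : (0 : ℝ) < (2 * c₀) ^ m := by positivity
        have hεkn : (0 : ℝ) < ε ^ (k + n) := pow_pos hε _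
        calc |ψ u| = (ε ^ (k + n))⁻¹ / (2 * c₀) ^ m * |ψ u| * ((2 * c₀) ^ m * ε ^ (k + n)) := by
              field_simp
          _ ≤ Cm * ((2 * c₀) ^ m * ε ^ (k + n)) :=
              mul_le_mul_of_nonneg_right hum (by positivity)
          _ = Cm * (2 * c₀) ^ m * ε ^ (k + n) := by ring
      have hφv : |1 - φ v| ≤ 1 := by
        obtain ⟨h0, h1⟩ := hφ01 v
        rw [abs_of_nonneg (by linarith)]
        linarith
      have hfg : f y - g y = (ε ^ k)⁻¹ * ψ u * (1 - φ v) := by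
        simp only [hf, hg]; ring
      rw [hfg, abs_mul, abs_mul, abs_of_pos (inv_pos.2 hεk)]
      have step1 : (ε ^ k)⁻¹ * |ψ u| * |1 - φ v| ≤ (ε ^ k)⁻¹ * |ψ u| := by
        calc (ε ^ k)⁻¹ * |ψ u| * |1 - φ v| ≤ (ε ^ k)⁻¹ * |ψ u| * 1 :=
            mul_le_mul_of_nonneg_left hφv (by positivity)
          _ = (ε ^ k)⁻¹ * |ψ u| := by ring
      have step2 : (ε ^ k)⁻¹ * |ψ u| ≤ Cm * (2 * c₀) ^ m * ε ^ n := by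
        calc (ε ^ k)⁻¹ * |ψ u| ≤ (ε ^ k)⁻¹ * (Cm * (2 * c₀) ^ m * ε ^ (k + n)) :=
            mul_le_mul_of_nonneg_left hψu (by positivity)
          _ = Cm * (2 * c₀) ^ m * ε ^ n := by
              rw [pow_add]; field_simp
      have step3 : (ε : ℝ) ^ n ≤ ε ^ N := by
        rw [← Real.rpow_natCast ε n]
        exact Real.rpow_le_rpow_of_exponent_ge hε hε1 (Nat.le_ceil N)
      calc (ε ^ k)⁻¹ * |ψ u| * |1 - φ v| ≤ (ε ^ k)⁻¹ * |ψ u| := step1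
        _ ≤ Cm * (2 * c₀) ^ m * ε ^ n := step2
        _ ≤ Cm * (2 * c₀) ^ m * ε ^ N :=
            mul_le_mul_of_nonneg_left step3 (by positivity)
  have hsub : mollify k ψ μ ε x - mollifyT k ψ φ c₀ μ ε x = ∫ y, (f y - g y) ∂μ :=
    (integral_sub hintf hintg).symm
  rw [hsub]
  have := MeasureTheory.norm_integral_le_of_norm_le_const (μ := μ)
    (f := fun y => f y - g y) (C := Cm * (2 * c₀) ^ m * ε ^ N)
    (Filter.Eventually.of_forall fun y => by rw [Real.norm_eq_abs]; exact key y)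
  simpa [Real.norm_eq_abs, measure_univ] using this
end
end
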